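/- Let n ≥ 1 and let s : ℝ × ℝⁿ → ℝⁿ be jointly measurable, such that for each t ≥ 0 the time-t map s(t,·) : ℝⁿ → ℝⁿ is a bijection whose inverse is s(−t,·) and s(−t,·) is differentiable everywhere. Let p, h₀ : ℝⁿ → [0,∞] be measurable, and assume the map (t,x) ↦ h₀(s(−t,x))·|det D_x s(−t,x)| is measurable on [0,∞) × ℝⁿ. Define ρ(x) = ∫₀^∞ h₀(s(−t,x))·|det D_x s(−t,x)| dt. If γ ∈ [0,∞] satisfies ∫_{ℝⁿ} p(x)·ρ(x) dλ(x) ≤ γ, then the probability of collision satisfies ∫₀^∞ ∫_{ℝⁿ} p(s(t,x))·h₀(x) dλ(x) dt ≤ γ; i.e., the navigation problem with probabilistic safety constraint level γ is verified by the occupation density ρ. -/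

import Mathlib

/-!
For each fixed `t ≥ 0`, the change of variables `y = s(t,x)`, whose inverse `s(-t,·)` is
differentiable, turns `∫ p(s(t,x)) h₀(x) dx` into `∫ p(y) [P_t h₀](y) dy`: the Perron–Frobenius
operator is the adjoint of composition with the flow. Tonelli then exchanges the time and space
integrals, which produces `∫ p ρ`.
-/

open MeasureTheory ENNReal

section ChangeOfVariables

variable {E : Type*} [NormedAddCommGroup E] [NormedSpace ℝ E]

/-- `S` is the inverse of the map along which the density `h` is transported. -/
noncomputable def perronFrobenius (S : E → E) (h : E → ℝ≥0∞) (y : E) : ℝ≥0∞ :=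
  h (S y) * ENNReal.ofReal |(fderiv ℝ S y).det|

variable [FiniteDimensional ℝ E] [MeasurableSpace E] [BorelSpace E]
  (μ : Measure E) [μ.IsAddHaarMeasure]

theorem lintegral_abs_det_fderiv_mul_comp_of_bijective {S : E → E}
    (hS : Function.Bijective S) (hdiff : Differentiable ℝ S) (g : E → ℝ≥0∞) :
    ∫⁻ y, ENNReal.ofReal |(fderiv ℝ S y).det| * g (S y) ∂μ = ∫⁻ x, g x ∂μ := by
  have := lintegral_image_eq_lintegral_abs_det_fderiv_mul μ MeasurableSet.univ
    (fun y _ => (hdiff y).hasFDerivAt.hasFDerivWithinAt) hS.injective.injOn g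
  rwa [Set.image_univ, hS.surjective.range_eq, Measure.restrict_univ,
    eq_comm] at this

theorem lintegral_comp_mul_eq_lintegral_mul_perronFrobenius {S T : E → E}
    (hST : Function.LeftInverse S T) (hTS : Function.RightInverse S T)
    (hdiff : Differentiable ℝ S) (p h : E → ℝ≥0∞) :
    ∫⁻ x, p (T x) * h x ∂μ = ∫⁻ y, p y * perronFrobenius S h y ∂μ := by
  rw [← lintegral_abs_det_fderiv_mul_comp_of_bijective μ
    ⟨hTS.injective, hST.surjective⟩ hdiff]
  refine lintegral_congr fun y => ?_
  rw [perronFrobenius, hTS y]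
  ring

end ChangeOfVariables

theorem lintegral_lintegral_mul_swap {α β : Type*} [MeasurableSpace α] [MeasurableSpace β]
    {μ : Measure α} {ν : Measure β} [SFinite μ] [SFinite ν] {f : α → β → ℝ≥0∞}
    (hf : AEMeasurable (Function.uncurry f) (μ.prod ν)) {p : β → ℝ≥0∞} (hp : AEMeasurable p ν) :
    ∫⁻ a, ∫⁻ b, p b * f a b ∂ν ∂μ = ∫⁻ b, p b * ∫⁻ a, f a b ∂μ ∂ν := by
  rw [lintegral_lintegral_swap
    ((hp.comp_quasiMeasurePreserving Measure.quasiMeasurePreserving_snd).mul hf)]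
  have hsections : ∀ᵐ b ∂ν, AEMeasurable (fun a => f a b) μ := by
    filter_upwards [hf.prod_swap.aestronglyMeasurable.prodMk_left] with b hb
    exact hb.aemeasurable
  refine lintegral_congr_ae ?_
  filter_upwards [hsections] with b hb
  exact lintegral_const_mul'' _ hb

theorem safety_verification_general
    (n : ℕ)
    (s : ℝ × EuclideanSpace ℝ (Fin n) → EuclideanSpace ℝ (Fin n))
    (hleft : ∀ t : ℝ, 0 ≤ t → ∀ x, s (-t, s (t, x)) = x)
    (hright : ∀ t : ℝ, 0 ≤ t → ∀ y, s (t, s (-t, y)) = y)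
    (hdiff : ∀ t : ℝ, 0 ≤ t → Differentiable ℝ (fun y => s (-t, y)))
    (p h₀ : EuclideanSpace ℝ (Fin n) → ℝ≥0∞)
    (hp : Measurable p)
    (Pth : ℝ → EuclideanSpace ℝ (Fin n) → ℝ≥0∞)
    (hPth : ∀ t x, Pth t x
      = h₀ (s (-t, x)) * ENNReal.ofReal |(fderiv ℝ (fun z => s (-t, z)) x).det|)
    (hPth_meas : AEMeasurable (fun q : ℝ × EuclideanSpace ℝ (Fin n) => Pth q.1 q.2)
      ((volume.restrict (Set.Ici (0 : ℝ))).prod volume))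
    (ρ : EuclideanSpace ℝ (Fin n) → ℝ≥0∞)
    (hρ : ∀ x, ρ x = ∫⁻ t in Set.Ici (0 : ℝ), Pth t x)
    (γ : ℝ≥0∞)
    (hγ : ∫⁻ x, p x * ρ x ≤ γ) :
    ∫⁻ t in Set.Ici (0 : ℝ), ∫⁻ x, p (s (t, x)) * h₀ x ≤ γ := by
  calc ∫⁻ t in Set.Ici (0 : ℝ), ∫⁻ x, p (s (t, x)) * h₀ x
      = ∫⁻ t in Set.Ici (0 : ℝ), ∫⁻ x, p x * Pth t x := by
        refine setLIntegral_congr_fun measurableSet_Ici fun t ht => ?_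
        rw [lintegral_comp_mul_eq_lintegral_mul_perronFrobenius volume
          (S := fun y => s (-t, y)) (hleft t ht) (hright t ht) (hdiff t ht)]
        simp only [perronFrobenius, hPth]
    _ = ∫⁻ x, p x * ρ x := by
        simp only [hρ]
        exact lintegral_lintegral_mul_swap hPth_meas hp.aemeasurable
    _ ≤ γ := hγ

/-- Convex verification of the probabilistic safety constraint: if the occupation
density `ρ(x) = ∫₀^∞ h₀(s(−t,x)) |det D_x s(−t,x)| dt` satisfies
`∫ p ρ dλ ≤ γ`, then the probability of collision satisfies
`∫₀^∞ ∫ p(s(t,x)) h₀(x) dλ(x) dt ≤ γ`. -/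
theorem safety_verification
    (n : ℕ) (hn : 1 ≤ n)
    (s : ℝ × EuclideanSpace ℝ (Fin n) → EuclideanSpace ℝ (Fin n))
    (hs : Measurable s)
    (hleft : ∀ t : ℝ, 0 ≤ t → ∀ x, s (-t, s (t, x)) = x)
    (hright : ∀ t : ℝ, 0 ≤ t → ∀ y, s (t, s (-t, y)) = y)
    (hdiff : ∀ t : ℝ, 0 ≤ t → Differentiable ℝ (fun y => s (-t, y)))
    (p h₀ : EuclideanSpace ℝ (Fin n) → ℝ≥0∞)
    (hp : Measurable p) (hh₀ : Measurable h₀)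
    (Pth : ℝ → EuclideanSpace ℝ (Fin n) → ℝ≥0∞)
    (hPth : ∀ t x, Pth t x
      = h₀ (s (-t, x)) * ENNReal.ofReal |(fderiv ℝ (fun z => s (-t, z)) x).det|)
    (hPth_meas : AEMeasurable (fun q : ℝ × EuclideanSpace ℝ (Fin n) => Pth q.1 q.2)
      ((volume.restrict (Set.Ici (0 : ℝ))).prod volume))
    (ρ : EuclideanSpace ℝ (Fin n) → ℝ≥0∞)
    (hρ : ∀ x, ρ x = ∫⁻ t in Set.Ici (0 : ℝ), Pth t x)
    (γ : ℝ≥0∞)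
    (hγ : ∫⁻ x, p x * ρ x ≤ γ) :
    ∫⁻ t in Set.Ici (0 : ℝ), ∫⁻ x, p (s (t, x)) * h₀ x ≤ γ :=
  safety_verification_general n s hleft hright hdiff p h₀ hp Pth hPth hPth_meas ρ hρ γ hγ
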